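/- Let y0 ≥ 1 and let (X,Y,Z) : [η0,η1] → ℝ³ be a solution of the system (S) with X(η) ≥ 0 and Z(η) ≥ 0 for all η ∈ [η0,η1]. If Y(η0) < y0, then Y(η) < y0 for every η ∈ [η0,η1]; indeed, at any point where Y = y0, X ≥ 0, Z ≥ 0 one has Y' = −y0² − (β/α)y0 + X(1−y0) − Z < 0. -/

import Mathlib

open Real Set Filter Topology

/-- The self-similar exponent `α = (σ+2)/((σ-2)(m-1))`. -/
noncomputable def ssAlpha (m σ : ℝ) : ℝ := (σ + 2) / ((σ - 2) * (m - 1))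

/-- The self-similar exponent `β = 2/(σ-2)`. -/
noncomputable def ssBeta (σ : ℝ) : ℝ := 2 / (σ - 2)

/-- `(X,Y,Z)` satisfies the quadratic system (S) at time `η`:
`X' = X((m−1)Y − 2X)`, `Y' = −Y² − (β/α)Y + X − XY − Z`, `Z' = (σ−2)XZ`. -/
def SysAt (m σ : ℝ) (X Y Z : ℝ → ℝ) (η : ℝ) : Prop :=
  HasDerivAt X (X η * ((m - 1) * Y η - 2 * X η)) η ∧
  HasDerivAt Y (-(Y η) ^ 2 - ssBeta σ / ssAlpha m σ * Y η + X η - X η * Y η - Z η) η ∧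
  HasDerivAt Z ((σ - 2) * X η * Z η) η

/-- The equilibrium `P0^λ = (0, λ, −λ² − (β/α)λ)` on the critical parabola. -/
noncomputable def P0pt (m σ l : ℝ) : ℝ × ℝ × ℝ :=
  (0, l, -l ^ 2 - ssBeta σ / ssAlpha m σ * l)

/-- The equilibrium `P2 = ((m−1)/(2(m+1)α), 1/((m+1)α), 0)`. -/
noncomputable def P2pt (m σ : ℝ) : ℝ × ℝ × ℝ :=
  ((m - 1) / (2 * (m + 1) * ssAlpha m σ), 1 / ((m + 1) * ssAlpha m σ), 0)

theorem image_lt_of_deriv_neg_boundary {f f' : ℝ → ℝ} {a b c : ℝ}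
    (hf : ∀ x ∈ Icc a b, HasDerivWithinAt f (f' x) (Icc a b) x) (ha : f a < c)
    (bound : ∀ x ∈ Icc a b, f x = c → f' x < 0) : ∀ x ∈ Icc a b, f x < c := by
  have hle : ∀ x ∈ Icc a b, f x ≤ c :=
    image_le_of_deriv_right_lt_deriv_boundary
      (fun x hx => (hf x hx).continuousWithinAt)
      (fun x hx => (hf x (Ico_subset_Icc_self hx)).mono_of_mem_nhdsWithin
        (Icc_mem_nhdsGE_of_mem hx))
      ha.le (fun _ => hasDerivAt_const _ c)
      (fun x hx hfx => bound x (Ico_subset_Icc_self hx) hfx)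
  intro t ht
  refine (hle t ht).lt_of_ne fun hft => ?_
  have hat : a < t := ht.1.lt_of_ne (by rintro rfl; exact ha.ne hft)
  -- `t` maximises `f` on `[a, b]`, so the derivative in the direction `a - t` is nonpositive
  have hmax : IsLocalMaxOn f (Icc a b) t :=
    IsMaxOn.localize fun x hx => (hle x hx).trans_eq hft.symm
  have hseg : segment ℝ t (t + (a - t)) ⊆ Icc a b := by
    rw [add_sub_cancel, segment_symm, segment_eq_Icc hat.le]
    exact Icc_subset_Icc le_rfl ht.2
  have hdir := hmax.hasFDerivWithinAt_nonpos (hf t ht).hasFDerivWithinAt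
    (mem_posTangentConeAt_of_segment_subset hseg)
  simp only [ContinuousLinearMap.toSpanSingleton_apply, smul_eq_mul] at hdir
  nlinarith [bound t ht hft]

theorem ssBeta_div_ssAlpha_nonneg {m σ : ℝ} (hm : 1 < m) (hσ : 2 < σ) :
    0 ≤ ssBeta σ / ssAlpha m σ := by
  unfold ssBeta ssAlpha
  have hm' : 0 < m - 1 := sub_pos.2 hm
  have hσ' : 0 < σ - 2 := sub_pos.2 hσ
  positivity

theorem neg_sq_sub_mul_add_mul_one_sub_sub_neg {c y x z : ℝ} (hc : 0 ≤ c) (hy : 1 ≤ y)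
    (hx : 0 ≤ x) (hz : 0 ≤ z) : -y ^ 2 - c * y + x * (1 - y) - z < 0 := by
  nlinarith [mul_nonneg hc (zero_le_one.trans hy), mul_nonneg hx (sub_nonneg.2 hy)]

theorem Y_lt_y0_invariant_general
    (m σ : ℝ) (hm1 : 1 < m) (hσ : 2 < σ)
    (y0 : ℝ) (hy0 : 1 ≤ y0)
    (η0 η1 : ℝ) (X Y Z : ℝ → ℝ)
    (hsol : ∀ η ∈ Icc η0 η1,
      HasDerivWithinAt X (X η * ((m - 1) * Y η - 2 * X η)) (Icc η0 η1) η ∧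
      HasDerivWithinAt Y
        (-(Y η) ^ 2 - ssBeta σ / ssAlpha m σ * Y η + X η - X η * Y η - Z η)
        (Icc η0 η1) η ∧
      HasDerivWithinAt Z ((σ - 2) * X η * Z η) (Icc η0 η1) η)
    (hX : ∀ η ∈ Icc η0 η1, 0 ≤ X η)
    (hZ : ∀ η ∈ Icc η0 η1, 0 ≤ Z η)
    (hY0 : Y η0 < y0) :
    (∀ η ∈ Icc η0 η1, Y η < y0) ∧
    ∀ x z : ℝ, 0 ≤ x → 0 ≤ z →
      -y0 ^ 2 - ssBeta σ / ssAlpha m σ * y0 + x * (1 - y0) - z < 0 := by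
  have hrate := fun x z (hx : 0 ≤ x) (hz : 0 ≤ z) =>
    neg_sq_sub_mul_add_mul_one_sub_sub_neg (ssBeta_div_ssAlpha_nonneg hm1 hσ) hy0 hx hz
  refine ⟨image_lt_of_deriv_neg_boundary (fun t ht => (hsol t ht).2.1) hY0 ?_, hrate⟩
  intro t ht hYt
  rw [hYt]
  linarith [hrate (X t) (Z t) (hX t ht) (hZ t ht)]

/-- for `y0 ≥ 1` the half-space `{Y < y0}` is forward invariant in the
region `{X ≥ 0, Z ≥ 0}`; indeed at any point with `Y = y0`, `X ≥ 0`, `Z ≥ 0` one has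
`Y' = −y0² − (β/α)y0 + X(1−y0) − Z < 0`. -/
theorem Y_lt_y0_invariant
    (m σ : ℝ) (hm1 : 1 < m) (hm2 : m < 2) (hσ : 2 < σ)
    (y0 : ℝ) (hy0 : 1 ≤ y0)
    (η0 η1 : ℝ) (hη : η0 ≤ η1) (X Y Z : ℝ → ℝ)
    (hsol : ∀ η ∈ Icc η0 η1,
      HasDerivWithinAt X (X η * ((m - 1) * Y η - 2 * X η)) (Icc η0 η1) η ∧
      HasDerivWithinAt Y
        (-(Y η) ^ 2 - ssBeta σ / ssAlpha m σ * Y η + X η - X η * Y η - Z η)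
        (Icc η0 η1) η ∧
      HasDerivWithinAt Z ((σ - 2) * X η * Z η) (Icc η0 η1) η)
    (hX : ∀ η ∈ Icc η0 η1, 0 ≤ X η)
    (hZ : ∀ η ∈ Icc η0 η1, 0 ≤ Z η)
    (hY0 : Y η0 < y0) :
    (∀ η ∈ Icc η0 η1, Y η < y0) ∧
    ∀ x z : ℝ, 0 ≤ x → 0 ≤ z →
      -y0 ^ 2 - ssBeta σ / ssAlpha m σ * y0 + x * (1 - y0) - z < 0 :=
  Y_lt_y0_invariant_general m σ hm1 hσ y0 hy0 η0 η1 X Y Z hsol hX hZ hY0
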